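/- Let φ be a 3-CNF formula over variables X with n = |X| variables and m clauses in which each clause has exactly 3 literals. Consider the graph G with: a positive literal vertex v_x and negative literal vertex v_{¬x} joined by an edge for each variable x; for each clause C a 4-clique on vertices {v^ℓ_C : ℓ ∈ C} ∪ {v_{C,d}}; an edge {v^ℓ_C, v_ℓ} for each clause C and literal ℓ ∈ C; and a special vertex v* adjacent to each dummy v_{C,d}. Then: every vertex cover of G has size at least n + 3m; if φ is satisfiable then G has a vertex cover of size exactly n + 3m; and if φ is unsatisfiable then the minimum vertex cover of G has size exactly n + 3m + 1. -/
import Mathlib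


/-- A literal is a variable together with a polarity. -/
abbrev Lit (X : Type*) := X × Bool

/-- Vertices of the 3-SAT-to-Vertex-Cover reduction graph (with special vertex):
literal vertices `v_ℓ`, per-clause literal-occurrence vertices `v^ℓ_C`,
per-clause dummy vertices `v_{C,d}`, and the special vertex `v*`. -/
abbrev SatVcVtx (X C : Type*) := Lit X ⊕ ((C × Lit X) ⊕ (C ⊕ Unit))

/-- Base relation of the reduction graph: an edge between the two literal
vertices of each variable; for each clause a 4-clique on its three occurrence
vertices and its dummy; an edge from each occurrence vertex to the
corresponding literal vertex; and an edge from each dummy to `v*`. -/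
def satVcRel {X C : Type*} [DecidableEq X] [DecidableEq C]
    (cl : C → Finset (Lit X)) : SatVcVtx X C → SatVcVtx X C → Prop
  | Sum.inl ℓ, Sum.inl ℓ' => ℓ.1 = ℓ'.1 ∧ ℓ.2 ≠ ℓ'.2
  | Sum.inl ℓ, Sum.inr (Sum.inl (c, ℓ')) => ℓ = ℓ' ∧ ℓ ∈ cl c
  | Sum.inr (Sum.inl (c, ℓ)), Sum.inr (Sum.inl (c', ℓ')) =>
      c = c' ∧ ℓ ≠ ℓ' ∧ ℓ ∈ cl c ∧ ℓ' ∈ cl c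
  | Sum.inr (Sum.inl (c, ℓ)), Sum.inr (Sum.inr (Sum.inl c')) =>
      c = c' ∧ ℓ ∈ cl c
  | Sum.inr (Sum.inr (Sum.inl _)), Sum.inr (Sum.inr (Sum.inr _)) => True
  | _, _ => False

/-- The 3-SAT-to-Vertex-Cover reduction graph. -/
def satVcGraph {X C : Type*} [DecidableEq X] [DecidableEq C]
    (cl : C → Finset (Lit X)) : SimpleGraph (SatVcVtx X C) :=
  SimpleGraph.fromRel (satVcRel cl)

/-- `S` is a vertex cover of the graph `G`. -/
def IsVC {W : Type*} (G : SimpleGraph W) (S : Finset W) : Prop :=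
  ∀ a b : W, G.Adj a b → a ∈ S ∨ b ∈ S

section Aux
open Finset

variable {X C : Type*} [DecidableEq X] [DecidableEq C]

lemma satVc_adj_iff {cl : C → Finset (Lit X)} {a b : SatVcVtx X C} :
    (satVcGraph cl).Adj a b ↔ a ≠ b ∧ (satVcRel cl a b ∨ satVcRel cl b a) :=
  SimpleGraph.fromRel_adj _ _ _

lemma isVC_of_rel (cl : C → Finset (Lit X)) (S : Finset (SatVcVtx X C))
    (h : ∀ a b, satVcRel cl a b → a ∈ S ∨ b ∈ S) : IsVC (satVcGraph cl) S := by
  intro a b hab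
  rcases (satVc_adj_iff.1 hab).2 with h1 | h1
  · exact h a b h1
  · exact (h b a h1).symm

/-- the pair of literal vertices for a variable -/
def Pset (x : X) : Finset (SatVcVtx X C) := {Sum.inl (x, true), Sum.inl (x, false)}

/-- the 4-clique of a clause -/
def Qset (cl : C → Finset (Lit X)) (c : C) : Finset (SatVcVtx X C) :=
  ((cl c).image fun ℓ => Sum.inr (Sum.inl (c, ℓ))) ∪ {Sum.inr (Sum.inr (Sum.inl c))}

lemma card_Pset (x : X) : (Pset (C := C) x).card = 2 := by
  simp [Pset]

lemma card_Qset {cl : C → Finset (Lit X)} (h3 : (cl c).card = 3) :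
    (Qset cl c).card = 4 := by
  rw [Qset, card_union_of_disjoint, card_image_of_injective, h3, card_singleton]
  · intro a b hab; simpa using hab
  · simp [disjoint_right]

lemma Qset_adj {cl : C → Finset (Lit X)} {c : C} {a b : SatVcVtx X C}
    (ha : a ∈ Qset cl c) (hb : b ∈ Qset cl c) (hne : a ≠ b) :
    (satVcGraph cl).Adj a b := by
  rw [Qset, mem_union, mem_image, mem_singleton] at ha hb
  rw [satVc_adj_iff]
  refine ⟨hne, ?_⟩
  rcases ha with ⟨ℓ, hℓ, rfl⟩ | rfl <;> rcases hb with ⟨ℓ', hℓ', rfl⟩ | rfl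
  · exact Or.inl ⟨rfl, by rintro rfl; exact hne rfl, hℓ, hℓ'⟩
  · exact Or.inl ⟨rfl, hℓ⟩
  · exact Or.inr ⟨rfl, hℓ'⟩
  · exact absurd rfl hne

lemma one_le_inter_Pset {cl : C → Finset (Lit X)} {S : Finset (SatVcVtx X C)}
    (hS : IsVC (satVcGraph cl) S) (x : X) : 1 ≤ (S ∩ Pset x).card := by
  have hadj : (satVcGraph cl).Adj (Sum.inl (x, true)) (Sum.inl (x, false)) := by
    rw [satVc_adj_iff]; exact ⟨by simp, Or.inl ⟨rfl, by simp⟩⟩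
  rw [Nat.one_le_iff_ne_zero, Ne, card_eq_zero, ← ne_eq, ← nonempty_iff_ne_empty]
  rcases hS _ _ hadj with h | h
  · exact ⟨_, mem_inter.2 ⟨h, by simp [Pset]⟩⟩
  · exact ⟨_, mem_inter.2 ⟨h, by simp [Pset]⟩⟩

lemma sdiff_Qset_card_le {cl : C → Finset (Lit X)} {S : Finset (SatVcVtx X C)}
    (hS : IsVC (satVcGraph cl) S) (c : C) : (Qset cl c \ S).card ≤ 1 := by
  rw [card_le_one]
  intro a ha b hb
  rw [mem_sdiff] at ha hb
  by_contra hne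
  rcases hS _ _ (Qset_adj ha.1 hb.1 hne) with h | h
  · exact ha.2 h
  · exact hb.2 h

lemma three_le_inter_Qset {cl : C → Finset (Lit X)} {S : Finset (SatVcVtx X C)}
    (h3 : (cl c).card = 3) (hS : IsVC (satVcGraph cl) S) : 3 ≤ (S ∩ Qset cl c).card := by
  have h1 := sdiff_Qset_card_le hS c
  have h2 : (Qset cl c \ S).card + (Qset cl c ∩ S).card = (Qset cl c).card :=
    card_sdiff_add_card_inter _ _
  rw [card_Qset h3] at h2
  rw [inter_comm]
  omega

end Aux

section Count
open Finset

variable {X C : Type*} [Fintype X] [DecidableEq X] [Fintype C] [DecidableEq C]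

lemma main_count {cl : C → Finset (Lit X)} (h3 : ∀ c, (cl c).card = 3)
    {S : Finset (SatVcVtx X C)} (hS : IsVC (satVcGraph cl) S) :
    Fintype.card X + 3 * Fintype.card C ≤ S.card ∧
    (S.card = Fintype.card X + 3 * Fintype.card C →
      ∃ σ : X → Bool, ∀ c, ∃ ℓ ∈ cl c, σ ℓ.1 = ℓ.2) := by
  classical
  set TP : Finset (SatVcVtx X C) := Finset.univ.biUnion (fun x : X => S ∩ Pset x) with hTP
  set TQ : Finset (SatVcVtx X C) := Finset.univ.biUnion (fun c : C => S ∩ Qset cl c) with hTQ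
  have hdisPP : ∀ x ∈ (Finset.univ : Finset X), ∀ y ∈ Finset.univ, x ≠ y →
      Disjoint (S ∩ Pset x) (S ∩ Pset (C := C) y) := by
    intro x _ y _ hxy
    simp only [disjoint_left, mem_inter, Pset, mem_insert, mem_singleton, and_imp]
    rintro a - (rfl | rfl) ⟨-, h | h⟩ <;> simp_all
  have hdisQQ : ∀ c ∈ (Finset.univ : Finset C), ∀ d ∈ Finset.univ, c ≠ d →
      Disjoint (S ∩ Qset cl c) (S ∩ Qset cl d) := by
    intro c _ d _ hcd
    simp only [disjoint_left, mem_inter, Qset, mem_union, mem_image, mem_singleton, and_imp]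
    rintro a - (⟨ℓ, -, rfl⟩ | rfl) ⟨-, (⟨ℓ', -, h⟩ | h)⟩ <;> simp_all
  have hdisT : Disjoint TP TQ := by
    simp only [hTP, hTQ, disjoint_left, mem_biUnion, mem_inter, Pset, Qset, mem_insert,
      mem_singleton, mem_union, mem_image]
    rintro a ⟨x, -, -, (rfl | rfl)⟩ ⟨c, -, -, (⟨ℓ, -, h⟩ | h)⟩ <;> simp_all
  have hTPcard : TP.card = ∑ x : X, (S ∩ Pset (C := C) x).card := card_biUnion hdisPP
  have hTQcard : TQ.card = ∑ c : C, (S ∩ Qset cl c).card := card_biUnion hdisQQ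
  have hsub : TP ∪ TQ ⊆ S := by
    intro a ha
    rcases mem_union.1 ha with h | h <;>
      · obtain ⟨_, -, h⟩ := mem_biUnion.1 h
        exact (mem_inter.1 h).1
  have hcardU : (TP ∪ TQ).card = TP.card + TQ.card := card_union_of_disjoint hdisT
  have hPle : ∀ x : X, 1 ≤ (S ∩ Pset (C := C) x).card := one_le_inter_Pset hS
  have hQle : ∀ c : C, 3 ≤ (S ∩ Qset cl c).card := fun c => three_le_inter_Qset (h3 c) hS
  have hsumP : Fintype.card X ≤ ∑ x : X, (S ∩ Pset (C := C) x).card := by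
    calc Fintype.card X = ∑ _x : X, 1 := by simp
    _ ≤ _ := Finset.sum_le_sum fun x _ => hPle x
  have hsumQ : 3 * Fintype.card C ≤ ∑ c : C, (S ∩ Qset cl c).card := by
    calc 3 * Fintype.card C = ∑ _c : C, 3 := by simp [mul_comm]
    _ ≤ _ := Finset.sum_le_sum fun c _ => hQle c
  have hle : Fintype.card X + 3 * Fintype.card C ≤ S.card := by
    have := card_le_card hsub
    omega
  refine ⟨hle, fun hcard => ?_⟩
  -- equality case
  have hTS : TP ∪ TQ = S := eq_of_subset_of_card_le hsub (by omega)
  have hTSc : (TP ∪ TQ).card = S.card := by rw [hTS]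
  have hsumPeq : ∑ x : X, (S ∩ Pset (C := C) x).card = Fintype.card X := by omega
  have hsumQeq : ∑ c : C, (S ∩ Qset cl c).card = 3 * Fintype.card C := by omega
  have hPeq : ∀ x : X, (S ∩ Pset (C := C) x).card = 1 := by
    have h := (Finset.sum_eq_sum_iff_of_le (fun x (_ : x ∈ Finset.univ) => hPle x)).1
      (by rw [hsumPeq]; simp)
    exact fun x => (h x (mem_univ x)).symm
  have hQeq : ∀ c : C, (S ∩ Qset cl c).card = 3 := by
    have h := (Finset.sum_eq_sum_iff_of_le (fun c (_ : c ∈ Finset.univ) => hQle c)).1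
      (by rw [hsumQeq]; simp [mul_comm])
    exact fun c => (h c (mem_univ c)).symm
  -- the star vertex is not in S
  have hstar : (Sum.inr (Sum.inr (Sum.inr ())) : SatVcVtx X C) ∉ S := by
    intro hmem
    rw [← hTS, mem_union] at hmem
    rcases hmem with h | h <;>
      · obtain ⟨w, -, hw⟩ := mem_biUnion.1 h
        have := (mem_inter.1 hw).2
        simp [Pset, Qset] at this
  -- define the assignment
  refine ⟨fun x => decide (Sum.inl (x, true) ∈ S), fun c => ?_⟩
  -- each clause's clique misses exactly one vertex, not the dummy
  have hmiss : (Qset cl c \ S).card = 1 := by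
    have h2 : (Qset cl c \ S).card + (Qset cl c ∩ S).card = (Qset cl c).card :=
      card_sdiff_add_card_inter _ _
    rw [card_Qset (h3 c)] at h2
    rw [inter_comm] at h2
    have := hQeq c
    omega
  obtain ⟨v, hv⟩ := card_eq_one.1 hmiss
  have hdummyQ : (Sum.inr (Sum.inr (Sum.inl c)) : SatVcVtx X C) ∈ Qset cl c := by
    simp [Qset]
  have hdummyS : (Sum.inr (Sum.inr (Sum.inl c)) : SatVcVtx X C) ∈ S := by
    by_contra hd
    -- dummy–star edge forces star ∈ S
    have hadj : (satVcGraph cl).Adj (Sum.inr (Sum.inr (Sum.inl c)))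
        (Sum.inr (Sum.inr (Sum.inr ()))) := by
      rw [satVc_adj_iff]
      exact ⟨by simp, Or.inl trivial⟩
    rcases hS _ _ hadj with h | h
    · exact hd h
    · exact hstar h
  have hvQ : v ∈ Qset cl c ∧ v ∉ S := by
    have : v ∈ Qset cl c \ S := hv ▸ mem_singleton_self v
    exact mem_sdiff.1 this
  obtain ⟨ℓ₀, hℓ₀, hveq⟩ : ∃ ℓ₀ ∈ cl c, v = Sum.inr (Sum.inl (c, ℓ₀)) := by
    have := hvQ.1
    rw [Qset, mem_union, mem_image] at this
    rcases this with ⟨ℓ, hℓ, h⟩ | h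
    · exact ⟨ℓ, hℓ, h.symm⟩
    · rw [mem_singleton] at h
      exact absurd (h ▸ hdummyS) hvQ.2
  -- the literal vertex of ℓ₀ is in S
  have hlitS : (Sum.inl ℓ₀ : SatVcVtx X C) ∈ S := by
    have hadj : (satVcGraph cl).Adj (Sum.inl ℓ₀) (Sum.inr (Sum.inl (c, ℓ₀))) := by
      rw [satVc_adj_iff]
      exact ⟨by simp, Or.inl ⟨rfl, hℓ₀⟩⟩
    rcases hS _ _ hadj with h | h
    · exact h
    · exact absurd (hveq ▸ h) hvQ.2
  refine ⟨ℓ₀, hℓ₀, ?_⟩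
  obtain ⟨x₀, b₀⟩ := ℓ₀
  simp only
  have hmemP : (Sum.inl (x₀, b₀) : SatVcVtx X C) ∈ S ∩ Pset x₀ := by
    rw [mem_inter]
    exact ⟨hlitS, by cases b₀ <;> simp [Pset]⟩
  cases b₀ with
  | true => simp [hlitS]
  | false =>
    simp only [decide_eq_false_iff_not]
    intro htrue
    have hmemP' : (Sum.inl (x₀, true) : SatVcVtx X C) ∈ S ∩ Pset x₀ := by
      rw [mem_inter]; exact ⟨htrue, by simp [Pset]⟩
    have : 2 ≤ (S ∩ Pset (C := C) x₀).card := by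
      have := Finset.one_lt_card.2 ⟨_, hmemP', _, hmemP, by simp⟩
      omega
    have := hPeq x₀
    omega

end Count

section Covers
open Finset

variable {X C : Type*} [Fintype X] [DecidableEq X] [Fintype C] [DecidableEq C]

lemma sat_cover {cl : C → Finset (Lit X)} (h3 : ∀ c, (cl c).card = 3)
    (σ : X → Bool) (hσ : ∀ c, ∃ ℓ ∈ cl c, σ ℓ.1 = ℓ.2) :
    ∃ S : Finset (SatVcVtx X C), IsVC (satVcGraph cl) S ∧
      S.card = Fintype.card X + 3 * Fintype.card C := by
  classical
  choose ℓc hmem hsat using hσ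
  set SA : Finset (SatVcVtx X C) :=
    Finset.univ.image (fun x : X => Sum.inl (x, σ x)) with hSA
  set SB : Finset (SatVcVtx X C) := Finset.univ.biUnion (fun c : C =>
    (((cl c).erase (ℓc c)).image fun ℓ => Sum.inr (Sum.inl (c, ℓ))) ∪
      {Sum.inr (Sum.inr (Sum.inl c))}) with hSB
  have hmemSA : ∀ x : X, (Sum.inl (x, σ x) : SatVcVtx X C) ∈ SA := by
    intro x; simp [hSA]
  have hmemSBocc : ∀ (c : C) (ℓ : Lit X), ℓ ∈ cl c → ℓ ≠ ℓc c →
      (Sum.inr (Sum.inl (c, ℓ)) : SatVcVtx X C) ∈ SB := by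
    intro c ℓ h1 h2
    simp only [hSB, mem_biUnion, mem_univ, true_and]
    exact ⟨c, mem_union.2 (Or.inl (mem_image.2 ⟨ℓ, mem_erase.2 ⟨h2, h1⟩, rfl⟩))⟩
  have hmemSBd : ∀ c : C, (Sum.inr (Sum.inr (Sum.inl c)) : SatVcVtx X C) ∈ SB := by
    intro c
    simp only [hSB, mem_biUnion, mem_univ, true_and]
    exact ⟨c, mem_union.2 (Or.inr (mem_singleton_self _))⟩
  refine ⟨SA ∪ SB, isVC_of_rel _ _ ?_, ?_⟩
  · rintro (⟨x, b1⟩ | (⟨c, ℓ⟩ | (c | u))) (⟨x', b2⟩ | (⟨c', ℓ'⟩ | (c' | u'))) hr <;>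
      try exact hr.elim
    · -- lit-lit
      obtain ⟨hx, hb⟩ := hr
      simp only at hx hb
      subst hx
      have : σ x = b1 ∨ σ x = b2 := by
        cases b1 <;> cases b2 <;> simp_all
      rcases this with h | h
      · exact Or.inl (mem_union_left _ (h ▸ hmemSA x))
      · exact Or.inr (mem_union_left _ (h ▸ hmemSA x))
    · -- lit-occ
      obtain ⟨heq, hc⟩ := hr
      subst heq
      by_cases hl : (x, b1) = ℓc c'
      · left
        apply mem_union_left
        have := hsat c'
        rw [← hl] at this
        simp only at this
        exact this ▸ hmemSA x
      · exact Or.inr (mem_union_right _ (hmemSBocc c' _ hc hl))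
    · -- occ-occ
      obtain ⟨hc, hne, h1, h2⟩ := hr
      subst hc
      by_cases hl : ℓ = ℓc c
      · subst hl
        exact Or.inr (mem_union_right _ (hmemSBocc c ℓ' h2 fun h => hne h.symm))
      · exact Or.inl (mem_union_right _ (hmemSBocc c ℓ h1 hl))
    · -- occ-dummy
      exact Or.inr (mem_union_right _ (hmemSBd c'))
    · -- dummy-star
      exact Or.inl (mem_union_right _ (hmemSBd c))
  · -- cardinality
    have hdisAB : Disjoint SA SB := by
      simp only [hSA, hSB, disjoint_left, mem_image, mem_biUnion, mem_union,
        mem_singleton, mem_univ, true_and]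
      rintro a ⟨x, rfl⟩ ⟨c, (h | h)⟩ <;> simp_all
    have hcardA : SA.card = Fintype.card X := by
      rw [hSA, card_image_of_injective _ (fun a b hab => by
          simp only [Sum.inl.injEq, Prod.mk.injEq] at hab; exact hab.1), card_univ]
    have hcardB : SB.card = 3 * Fintype.card C := by
      rw [hSB, card_biUnion]
      · have hpart : ∀ c : C,
            ((((cl c).erase (ℓc c)).image fun ℓ =>
              (Sum.inr (Sum.inl (c, ℓ)) : SatVcVtx X C)) ∪
              {Sum.inr (Sum.inr (Sum.inl c))}).card = 3 := by
          intro c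
          rw [card_union_of_disjoint (by simp [disjoint_right]),
            card_image_of_injective _ (fun a b hab => by simpa using hab),
            card_erase_of_mem (hmem c), h3, card_singleton]
        rw [Finset.sum_congr rfl fun c _ => hpart c]
        simp [mul_comm, card_univ]
      · intro c _ d _ hcd
        simp only [disjoint_left, mem_union, mem_image, mem_singleton]
        rintro a (⟨ℓ, -, rfl⟩ | rfl) (⟨ℓ', -, h⟩ | h) <;> simp_all
    rw [card_union_of_disjoint hdisAB, hcardA, hcardB]

lemma big_cover {cl : C → Finset (Lit X)} (h3 : ∀ c, (cl c).card = 3) :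
    ∃ S : Finset (SatVcVtx X C), IsVC (satVcGraph cl) S ∧
      S.card = Fintype.card X + 3 * Fintype.card C + 1 := by
  classical
  set SA : Finset (SatVcVtx X C) :=
    Finset.univ.image (fun x : X => Sum.inl (x, true)) with hSA
  set SB : Finset (SatVcVtx X C) := Finset.univ.biUnion (fun c : C =>
    (cl c).image fun ℓ => Sum.inr (Sum.inl (c, ℓ))) with hSB
  set Sstar : Finset (SatVcVtx X C) := {Sum.inr (Sum.inr (Sum.inr ()))} with hSs
  have hmemSB : ∀ (c : C) (ℓ : Lit X), ℓ ∈ cl c →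
      (Sum.inr (Sum.inl (c, ℓ)) : SatVcVtx X C) ∈ SB := by
    intro c ℓ h1
    simp only [hSB, mem_biUnion, mem_univ, true_and]
    exact ⟨c, mem_image.2 ⟨ℓ, h1, rfl⟩⟩
  refine ⟨SA ∪ SB ∪ Sstar, isVC_of_rel _ _ ?_, ?_⟩
  · rintro (⟨x, b1⟩ | (⟨c, ℓ⟩ | (c | u))) (⟨x', b2⟩ | (⟨c', ℓ'⟩ | (c' | u'))) hr <;>
      try exact hr.elim
    · -- lit-lit
      obtain ⟨hx, hb⟩ := hr
      simp only at hx hb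
      subst hx
      have hA : (Sum.inl (x, true) : SatVcVtx X C) ∈ SA := by simp [hSA]
      cases b1
      · cases b2
        · exact absurd rfl hb
        · exact Or.inr (mem_union_left _ (mem_union_left _ hA))
      · exact Or.inl (mem_union_left _ (mem_union_left _ hA))
    · -- lit-occ
      obtain ⟨heq, hc⟩ := hr
      subst heq
      exact Or.inr (mem_union_left _ (mem_union_right _ (hmemSB c' _ hc)))
    · -- occ-occ
      obtain ⟨hc, hne, h1, h2⟩ := hr
      exact Or.inl (mem_union_left _ (mem_union_right _ (hmemSB c ℓ h1)))
    · -- occ-dummy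
      obtain ⟨hc, h1⟩ := hr
      exact Or.inl (mem_union_left _ (mem_union_right _ (hmemSB c ℓ h1)))
    · -- dummy-star
      exact Or.inr (mem_union_right _ (by simp [hSs]))
  · have hdisAB : Disjoint SA SB := by
      simp only [hSA, hSB, disjoint_left, mem_image, mem_biUnion, mem_univ, true_and]
      rintro a ⟨x, rfl⟩ ⟨c, h⟩ <;> simp_all
    have hdisABs : Disjoint (SA ∪ SB) Sstar := by
      rw [hSs, Finset.disjoint_singleton_right]
      simp [hSA, hSB]
    have hcardA : SA.card = Fintype.card X := by
      rw [hSA, card_image_of_injective _ (fun a b hab => by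
          simp only [Sum.inl.injEq, Prod.mk.injEq] at hab; exact hab.1), card_univ]
    have hcardB : SB.card = 3 * Fintype.card C := by
      rw [hSB, card_biUnion]
      · have hpart : ∀ c : C, ((cl c).image fun ℓ =>
            (Sum.inr (Sum.inl (c, ℓ)) : SatVcVtx X C)).card = 3 := by
          intro c
          rw [card_image_of_injective _ (fun a b hab => by simpa using hab), h3]
        rw [Finset.sum_congr rfl fun c _ => hpart c]
        simp [mul_comm, card_univ]
      · intro c _ d _ hcd
        simp only [disjoint_left, mem_image]
        rintro a ⟨ℓ, -, rfl⟩ ⟨ℓ', -, h⟩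
        simp_all
    rw [card_union_of_disjoint hdisABs, card_union_of_disjoint hdisAB, hcardA, hcardB,
      hSs, card_singleton]

end Covers

/-- For a 3-CNF formula with `n` variables and `m` clauses (each
of exactly 3 literals): every vertex cover of the reduction graph has size at
least `n + 3m`; if the formula is satisfiable there is one of size exactly
`n + 3m`; if it is unsatisfiable, the minimum vertex cover has size exactly
`n + 3m + 1`. -/
theorem satVc_vertex_cover_sizes
    {X C : Type*} [Fintype X] [DecidableEq X] [Fintype C] [DecidableEq C]
    (cl : C → Finset (Lit X)) (h3 : ∀ c, (cl c).card = 3) :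
    (∀ S : Finset (SatVcVtx X C), IsVC (satVcGraph cl) S →
      Fintype.card X + 3 * Fintype.card C ≤ S.card) ∧
    ((∃ σ : X → Bool, ∀ c, ∃ ℓ ∈ cl c, σ ℓ.1 = ℓ.2) →
      ∃ S : Finset (SatVcVtx X C), IsVC (satVcGraph cl) S ∧
        S.card = Fintype.card X + 3 * Fintype.card C) ∧
    ((¬ ∃ σ : X → Bool, ∀ c, ∃ ℓ ∈ cl c, σ ℓ.1 = ℓ.2) →
      (∃ S : Finset (SatVcVtx X C), IsVC (satVcGraph cl) S ∧
        S.card = Fintype.card X + 3 * Fintype.card C + 1) ∧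
      (∀ S : Finset (SatVcVtx X C), IsVC (satVcGraph cl) S →
        Fintype.card X + 3 * Fintype.card C + 1 ≤ S.card)) := by
  refine ⟨fun S hS => (main_count h3 hS).1, fun ⟨σ, hσ⟩ => sat_cover h3 σ hσ,
    fun hunsat => ⟨big_cover h3, fun S hS => ?_⟩⟩
  obtain ⟨h1, h2⟩ := main_count h3 hS
  by_contra hlt
  push_neg at hlt
  have hcard : S.card = Fintype.card X + 3 * Fintype.card C := by omega
  exact hunsat (h2 hcard)
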